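/- arXiv:1501.01414 — 2 statements merged into one kernel-verified Lean document; each statement's English description precedes it below -/
import Mathlib

section
/- Let d ≥ 1 be an integer and let s ≤ 0 ≤ k be real numbers. For a Schwartz function g : ℝ^d → ℂ define ‖g‖_{H^σ}² = ∫_{ℝ^d} (1+|ξ|²)^σ |ĝ(ξ)|² dξ, where ĝ(ξ) = ∫_{ℝ^d} e^{−i x·ξ} g(x) dx. Then there exists a constant C > 0 such that for every Schwartz function f and every v ∈ ℝ^d with |v| ≥ 1, the modulated function f_v(x) = e^{−i v·x} f(x) satisfies ‖f_v‖_{H^s} ≤ C ( |v|^s ‖f‖_{L²} + |v|^{−k} ‖f‖_{H^k} ). -/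
/-!
The Fourier transform of `x ↦ e^{-i v·x} f(x)` is the translate `ξ ↦ f̂(ξ + v)`, so the squared
`H^s` norm of the modulated function is `∫ (1 + |η - v|²)^s |f̂(η)|² dη`. Split at `|η| = |v|/2`.
For `|η| ≤ |v|/2` we have `|η - v| ≥ |v|/2`, so the weight is at most `4^{-s} |v|^{2s}`; for
`|η| > |v|/2`, since `s ≤ 0`, it is at most `1 ≤ 4^k |v|^{-2k} (1 + |η|²)^k`. Integrating, the
first part is `|v|^{2s}` times `∫ |f̂|² = (2π)^d ‖f‖²_{L²}` (Plancherel, in Mathlib's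
`e^{-2πi x·ξ}` normalisation), and the second is `|v|^{-2k} ‖f‖²_{H^k}`.
-/

open scoped RealInnerProductSpace

/-- The Fourier transform `ĝ(ξ) = ∫ e^{-i x·ξ} g(x) dx`. -/
noncomputable def fourierT {d : ℕ} (g : EuclideanSpace ℝ (Fin d) → ℂ)
    (ξ : EuclideanSpace ℝ (Fin d)) : ℂ :=
  ∫ x : EuclideanSpace ℝ (Fin d), Complex.exp (-(Complex.I * ((⟪x, ξ⟫ : ℝ) : ℂ))) * g x

/-- The Sobolev norm `‖g‖_{H^σ} = (∫ (1+|ξ|²)^σ |ĝ(ξ)|² dξ)^{1/2}`. -/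
noncomputable def sobolevNorm {d : ℕ} (σ : ℝ) (g : EuclideanSpace ℝ (Fin d) → ℂ) : ℝ :=
  Real.sqrt (∫ ξ : EuclideanSpace ℝ (Fin d), (1 + ‖ξ‖^2) ^ σ * ‖fourierT g ξ‖^2)

/-- The `L²` norm `‖g‖_{L²} = (∫ |g(x)|² dx)^{1/2}`. -/
noncomputable def l2Norm {d : ℕ} (g : EuclideanSpace ℝ (Fin d) → ℂ) : ℝ :=
  Real.sqrt (∫ x : EuclideanSpace ℝ (Fin d), ‖g x‖^2)

open MeasureTheory FourierTransform SchwartzMap Real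

theorem SchwartzMap.integrable_one_add_norm_sq_rpow_mul_norm_sq {E F : Type*}
    [NormedAddCommGroup E] [InnerProductSpace ℝ E] [FiniteDimensional ℝ E]
    [MeasurableSpace E] [BorelSpace E] [NormedAddCommGroup F] [NormedSpace ℝ F]
    (μ : Measure E) [μ.HasTemperateGrowth] (g : 𝓢(E, F)) (r : ℝ) :
    Integrable (fun x => (1 + ‖x‖ ^ 2) ^ r * ‖g x‖ ^ 2) μ := by
  have hw := Function.hasTemperateGrowth_one_add_norm_sq_rpow E (r / 2)
  refine ((smulLeftCLM F (fun x : E => (1 + ‖x‖ ^ 2) ^ (r / 2)) g).memLp 2 μ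
    |>.integrable_norm_pow two_ne_zero).congr (.of_forall fun x => ?_)
  dsimp only
  rw [smulLeftCLM_apply_apply hw, norm_smul, mul_pow, Real.norm_of_nonneg (by positivity),
    ← Real.rpow_mul_natCast (by positivity)]
  ring_nf

theorem one_add_norm_sub_sq_rpow_le_of_norm_le_half {E : Type*} [SeminormedAddCommGroup E]
    {s : ℝ} (hs : s ≤ 0) {v η : E} (hv : 0 < ‖v‖) (hη : ‖η‖ ≤ ‖v‖ / 2) :
    (1 + ‖η - v‖ ^ 2) ^ s ≤ 4 ^ (-s) * (‖v‖ ^ s) ^ 2 := by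
  have hdist : ‖v‖ / 2 ≤ ‖η - v‖ := by
    have := norm_sub_norm_le v η
    rw [norm_sub_rev] at this
    linarith
  calc (1 + ‖η - v‖ ^ 2) ^ s ≤ (‖v‖ ^ 2 / 4) ^ s :=
        Real.rpow_le_rpow_of_nonpos (by positivity) (by nlinarith [norm_nonneg v]) hs
    _ = 4 ^ (-s) * (‖v‖ ^ s) ^ 2 := by
        rw [Real.div_rpow (by positivity) (by norm_num), Real.rpow_pow_comm hv.le,
          Real.rpow_neg (by norm_num)]
        ring

theorem one_add_norm_sub_sq_rpow_le_of_half_lt_norm {E : Type*} [SeminormedAddCommGroup E]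
    {s k : ℝ} (hs : s ≤ 0) (hk : 0 ≤ k) {v η : E} (hv : 0 < ‖v‖) (hη : ‖v‖ / 2 < ‖η‖) :
    (1 + ‖η - v‖ ^ 2) ^ s ≤ 4 ^ k * (‖v‖ ^ (-k)) ^ 2 * (1 + ‖η‖ ^ 2) ^ k :=
  calc (1 + ‖η - v‖ ^ 2) ^ s ≤ 1 :=
        Real.rpow_le_one_of_one_le_of_nonpos (by nlinarith [norm_nonneg (η - v)]) hs
    _ = 4 ^ k * (‖v‖ ^ (-k)) ^ 2 * (‖v‖ ^ 2 / 4) ^ k := by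
        rw [Real.div_rpow (by positivity) (by norm_num), ← Real.rpow_pow_comm hv.le,
          Real.rpow_neg hv.le]
        field_simp
    _ ≤ 4 ^ k * (‖v‖ ^ (-k)) ^ 2 * (1 + ‖η‖ ^ 2) ^ k := by
        gcongr
        nlinarith [norm_nonneg v]

theorem one_add_norm_sub_sq_rpow_le {E : Type*} [SeminormedAddCommGroup E]
    {s k : ℝ} (hs : s ≤ 0) (hk : 0 ≤ k) {v : E} (hv : 0 < ‖v‖) (η : E) :
    (1 + ‖η - v‖ ^ 2) ^ s
      ≤ (4 ^ (-s) + 4 ^ k) * ((‖v‖ ^ s) ^ 2 + (‖v‖ ^ (-k)) ^ 2 * (1 + ‖η‖ ^ 2) ^ k) := by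
  have h4s : (0 : ℝ) ≤ 4 ^ (-s) := by positivity
  have h4k : (0 : ℝ) ≤ 4 ^ k := by positivity
  have hvs : 0 ≤ (‖v‖ ^ s) ^ 2 := by positivity
  have hvk : 0 ≤ (‖v‖ ^ (-k)) ^ 2 * (1 + ‖η‖ ^ 2) ^ k := by positivity
  rcases le_or_gt ‖η‖ (‖v‖ / 2) with hη | hη
  · have := one_add_norm_sub_sq_rpow_le_of_norm_le_half hs hv hη
    nlinarith
  · have := one_add_norm_sub_sq_rpow_le_of_half_lt_norm hs hk hv hη
    nlinarith

theorem le_sqrt_mul_add_of_sq_le {x a b A B : ℝ} (hA : 0 ≤ A) (hB : 0 ≤ B) (ha : 0 ≤ a)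
    (hb : 0 ≤ b) (h : x ^ 2 ≤ A * (B * a ^ 2 + b ^ 2)) :
    x ≤ Real.sqrt (A * (B + 1)) * (a + b) :=
  calc x ≤ |x| := le_abs_self x
    _ ≤ Real.sqrt (A * (B + 1) * (a + b) ^ 2) := Real.abs_le_sqrt <| h.trans <| by
        nlinarith [mul_nonneg hA (mul_nonneg ha hb), mul_nonneg hA (sq_nonneg a),
          mul_nonneg hA (mul_nonneg hB (mul_nonneg ha hb)),
          mul_nonneg hA (mul_nonneg hB (sq_nonneg b))]
    _ = Real.sqrt (A * (B + 1)) * (a + b) := by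
        rw [Real.sqrt_mul (by positivity), Real.sqrt_sq (by positivity)]

section

variable {d : ℕ}

theorem fourierT_eq_fourier_smul (g : EuclideanSpace ℝ (Fin d) → ℂ)
    (ξ : EuclideanSpace ℝ (Fin d)) : fourierT g ξ = 𝓕 g ((2 * π)⁻¹ • ξ) := by
  rw [Real.fourier_eq', fourierT]
  congr 1 with x
  rw [real_inner_smul_right, smul_eq_mul,
    show -2 * π * ((2 * π)⁻¹ * ⟪x, ξ⟫) = -⟪x, ξ⟫ by field_simp]
  push_cast
  ring_nf

theorem fourierT_modulation (g : EuclideanSpace ℝ (Fin d) → ℂ)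
    (v ξ : EuclideanSpace ℝ (Fin d)) :
    fourierT (fun x => Complex.exp (-(Complex.I * ((⟪v, x⟫ : ℝ) : ℂ))) * g x) ξ
      = fourierT g (ξ + v) := by
  unfold fourierT
  congr 1 with x
  rw [← mul_assoc, ← Complex.exp_add, inner_add_right, real_inner_comm v x]
  push_cast
  ring_nf

theorem sobolevNorm_modulation (σ : ℝ) (g : EuclideanSpace ℝ (Fin d) → ℂ)
    (v : EuclideanSpace ℝ (Fin d)) :
    sobolevNorm σ (fun x => Complex.exp (-(Complex.I * ((⟪v, x⟫ : ℝ) : ℂ))) * g x)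
      = Real.sqrt (∫ η, (1 + ‖η - v‖ ^ 2) ^ σ * ‖fourierT g η‖ ^ 2) := by
  simp_rw [sobolevNorm, fourierT_modulation]
  congr 1
  simpa using
    integral_add_right_eq_self (fun η => (1 + ‖η - v‖ ^ 2) ^ σ * ‖fourierT g η‖ ^ 2) v

theorem sq_sobolevNorm (σ : ℝ) (g : EuclideanSpace ℝ (Fin d) → ℂ) :
    sobolevNorm σ g ^ 2 = ∫ ξ, (1 + ‖ξ‖ ^ 2) ^ σ * ‖fourierT g ξ‖ ^ 2 :=
  Real.sq_sqrt (integral_nonneg fun _ => by positivity)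

theorem sq_l2Norm (g : EuclideanSpace ℝ (Fin d) → ℂ) : l2Norm g ^ 2 = ∫ x, ‖g x‖ ^ 2 :=
  Real.sq_sqrt (integral_nonneg fun _ => by positivity)

theorem integral_norm_fourierT_sq (f : 𝓢(EuclideanSpace ℝ (Fin d), ℂ)) :
    ∫ ξ, ‖fourierT f ξ‖ ^ 2 = (2 * π) ^ d * l2Norm f ^ 2 := by
  simp_rw [fourierT_eq_fourier_smul]
  rw [Measure.integral_comp_inv_smul volume (fun w => ‖𝓕 (f : _ → ℂ) w‖ ^ 2),
    ← fourier_coe, integral_norm_sq_fourier, sq_l2Norm, finrank_euclideanSpace_fin,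
    abs_of_pos (by positivity), smul_eq_mul]

theorem integrable_one_add_norm_sq_rpow_mul_norm_fourierT_sq
    (f : 𝓢(EuclideanSpace ℝ (Fin d), ℂ)) (r : ℝ) :
    Integrable (fun ξ => (1 + ‖ξ‖ ^ 2) ^ r * ‖fourierT f ξ‖ ^ 2) := by
  have hscale : fourierT f = compCLMOfContinuousLinearEquiv ℂ
      (ContinuousLinearEquiv.smulLeft (Units.mk0 (2 * π)⁻¹ (by positivity))) (𝓕 f) := by
    ext ξ
    rw [fourierT_eq_fourier_smul]
    rfl
  rw [hscale]
  exact (compCLMOfContinuousLinearEquiv ℂ _ (𝓕 f)).integrable_one_add_norm_sq_rpow_mul_norm_sq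
    volume r

theorem sq_sobolevNorm_modulation_le {s k : ℝ} (hs : s ≤ 0) (hk : 0 ≤ k)
    (f : 𝓢(EuclideanSpace ℝ (Fin d), ℂ)) {v : EuclideanSpace ℝ (Fin d)} (hv : 0 < ‖v‖) :
    sobolevNorm s (fun x => Complex.exp (-(Complex.I * ((⟪v, x⟫ : ℝ) : ℂ))) * f x) ^ 2
      ≤ (4 ^ (-s) + 4 ^ k) * ((2 * π) ^ d * (‖v‖ ^ s * l2Norm f) ^ 2
          + (‖v‖ ^ (-k) * sobolevNorm k f) ^ 2) := by
  set A : ℝ := 4 ^ (-s) + 4 ^ k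
  have hL2 : Integrable (fun ξ => ‖fourierT f ξ‖ ^ 2) := by
    simpa using integrable_one_add_norm_sq_rpow_mul_norm_fourierT_sq f 0
  have hHk := integrable_one_add_norm_sq_rpow_mul_norm_fourierT_sq f k
  rw [sobolevNorm_modulation, Real.sq_sqrt (integral_nonneg fun _ => by positivity)]
  calc ∫ η, (1 + ‖η - v‖ ^ 2) ^ s * ‖fourierT f η‖ ^ 2
      ≤ ∫ η, A * (‖v‖ ^ s) ^ 2 * ‖fourierT f η‖ ^ 2
          + A * (‖v‖ ^ (-k)) ^ 2 * ((1 + ‖η‖ ^ 2) ^ k * ‖fourierT f η‖ ^ 2) := by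
        refine integral_mono_of_nonneg (.of_forall fun η => by positivity)
          ((hL2.const_mul _).add (hHk.const_mul _)) (.of_forall fun η => ?_)
        have := mul_le_mul_of_nonneg_right (one_add_norm_sub_sq_rpow_le hs hk hv η)
          (sq_nonneg ‖fourierT f η‖)
        linarith
    _ = A * ((2 * π) ^ d * (‖v‖ ^ s * l2Norm f) ^ 2
          + (‖v‖ ^ (-k) * sobolevNorm k f) ^ 2) := by
        rw [integral_add (hL2.const_mul _) (hHk.const_mul _), integral_const_mul,
          integral_const_mul, integral_norm_fourierT_sq, ← sq_sobolevNorm]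
        ring

end

theorem modulated_sobolev_upper_bound_general
    (d : ℕ) (s k : ℝ) (hs : s ≤ 0) (hk : 0 ≤ k) :
    ∃ C : ℝ, 0 < C ∧
      ∀ (f : SchwartzMap (EuclideanSpace ℝ (Fin d)) ℂ) (v : EuclideanSpace ℝ (Fin d)),
        1 ≤ ‖v‖ →
        sobolevNorm s (fun x => Complex.exp (-(Complex.I * ((⟪v, x⟫ : ℝ) : ℂ))) * f x)
          ≤ C * (‖v‖ ^ s * l2Norm (fun x => f x) + ‖v‖ ^ (-k) * sobolevNorm k (fun x => f x)) := by
  refine ⟨Real.sqrt ((4 ^ (-s) + 4 ^ k) * ((2 * π) ^ d + 1)), by positivity,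
    fun f v hv => ?_⟩
  exact le_sqrt_mul_add_of_sq_le (by positivity) (by positivity)
    (mul_nonneg (by positivity) (Real.sqrt_nonneg _))
    (mul_nonneg (by positivity) (Real.sqrt_nonneg _))
    (sq_sobolevNorm_modulation_le hs hk f (one_pos.trans_le hv))

theorem modulated_sobolev_upper_bound
    (d : ℕ) (hd : 1 ≤ d) (s k : ℝ) (hs : s ≤ 0) (hk : 0 ≤ k) :
    ∃ C : ℝ, 0 < C ∧
      ∀ (f : SchwartzMap (EuclideanSpace ℝ (Fin d)) ℂ) (v : EuclideanSpace ℝ (Fin d)),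
        1 ≤ ‖v‖ →
        sobolevNorm s (fun x => Complex.exp (-(Complex.I * ((⟪v, x⟫ : ℝ) : ℂ))) * f x)
          ≤ C * (‖v‖ ^ s * l2Norm (fun x => f x) + ‖v‖ ^ (-k) * sobolevNorm k (fun x => f x)) :=
  modulated_sobolev_upper_bound_general d s k hs hk
end

section
/- Let d ≥ 1 be an integer, σ ∈ (0,1), p > 1 a real number, ω > 0, and v ∈ ℝ^d with v ≠ 0. For a Schwartz function g define the Fourier multiplier operators ((−Δ)^σ g)(x) = (2π)^{−d} ∫_{ℝ^d} e^{i x·ξ} |ξ|^{2σ} ĝ(ξ) dξ and (𝒫_v g)(x) = (2π)^{−d} ∫_{ℝ^d} e^{i x·ξ} p_v(ξ) ĝ(ξ) dξ, where ĝ(ξ) = ∫ e^{−i x·ξ} g(x) dx and p_v(ξ) = |ξ−v|^{2σ} − |v|^{2σ} + 2σ|v|^{2σ−2} (v·ξ). Let Q : ℝ^d → ℂ be a Schwartz function satisfying the profile equation 𝒫_v Q(x) + ω^{2σ} Q(x) − |Q(x)|^{p−1} Q(x) = 0 for all x ∈ ℝ^d. Define u(t,x) = e^{i t (|v|^{2σ}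 − ω^{2σ})} e^{−i v·x} Q(x − 2tσ|v|^{2σ−2} v). Then for every (t,x), the map t ↦ u(t,x) is differentiable and i ∂_t u(t,x) + ((−Δ)^σ u(t,·))(x) − |u(t,x)|^{p−1} u(t,x) = 0; that is, u is an exact traveling solitary-wave solution of the focusing fractional NLS i∂_t u + (−Δ)^σ u − |u|^{p−1}u = 0. -/
open scoped RealInnerProductSpace

/-- The fractional Laplacian `(-Δ)^σ`, the Fourier multiplier with symbol `|ξ|^{2σ}`:
`((-Δ)^σ g)(x) = (2π)^{-d} ∫ e^{i x·ξ} |ξ|^{2σ} ĝ(ξ) dξ`. -/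
noncomputable def fracLap {d : ℕ} (σ : ℝ) (g : EuclideanSpace ℝ (Fin d) → ℂ)
    (x : EuclideanSpace ℝ (Fin d)) : ℂ :=
  (((2 * Real.pi) ^ (-(d:ℝ)) : ℝ) : ℂ) *
    ∫ ξ : EuclideanSpace ℝ (Fin d),
      Complex.exp (Complex.I * ((⟪x, ξ⟫ : ℝ) : ℂ)) * ((‖ξ‖ ^ (2*σ) : ℝ) : ℂ) * fourierT g ξ

/-- The symbol `p_v(ξ) = |ξ-v|^{2σ} - |v|^{2σ} + 2σ|v|^{2σ-2} (v·ξ)` of the operator `𝒫_v`. -/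
noncomputable def pSymbol {d : ℕ} (σ : ℝ) (v ξ : EuclideanSpace ℝ (Fin d)) : ℝ :=
  ‖ξ - v‖ ^ (2*σ) - ‖v‖ ^ (2*σ) + 2*σ*‖v‖ ^ (2*σ - 2) * ⟪v, ξ⟫

/-- The Fourier multiplier operator `𝒫_v` with symbol `p_v`. -/
noncomputable def pOp {d : ℕ} (σ : ℝ) (v : EuclideanSpace ℝ (Fin d))
    (g : EuclideanSpace ℝ (Fin d) → ℂ) (x : EuclideanSpace ℝ (Fin d)) : ℂ :=
  (((2 * Real.pi) ^ (-(d:ℝ)) : ℝ) : ℂ) *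
    ∫ ξ : EuclideanSpace ℝ (Fin d),
      Complex.exp (Complex.I * ((⟪x, ξ⟫ : ℝ) : ℂ)) * ((pSymbol σ v ξ : ℝ) : ℂ) * fourierT g ξ

/-- The traveling solitary wave built from a profile `Q` solving the profile equation. -/
noncomputable def solitonWave {d : ℕ} (σ ω : ℝ) (v : EuclideanSpace ℝ (Fin d))
    (Q : SchwartzMap (EuclideanSpace ℝ (Fin d)) ℂ)
    (t : ℝ) (x : EuclideanSpace ℝ (Fin d)) : ℂ :=
  Complex.exp (Complex.I * (t : ℂ) * (((‖v‖ ^ (2*σ) - ω ^ (2*σ) : ℝ)) : ℂ))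
    * Complex.exp (-(Complex.I * ((⟪v, x⟫ : ℝ) : ℂ)))
    * Q (x - (2 * t * σ * ‖v‖ ^ (2*σ - 2)) • v)

/-! The wave `u(t)` is a modulated translate of `Q`, and conjugating a Fourier multiplier by the
modulation `e^{-iv·x}` shifts its symbol by `v`, while the translation only contributes a phase.
Hence `(-Δ)^σ u(t)` is the modulated translate of the multiplier with symbol
`|ξ - v|^{2σ} = p_v(ξ) + |v|^{2σ} - 2σ|v|^{2σ-2} v·ξ` applied to `Q`; by Fourier inversion the three
pieces give `𝒫_v Q + |v|^{2σ} Q + 2iσ|v|^{2σ-2} ∂_v Q`. The splitting is legitimate because all three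
symbols grow polynomially while the Fourier transform of `Q` decays rapidly. The time derivative of
`u` produces the phase term `i(|v|^{2σ} - ω^{2σ}) u` and the transport term
`-2σ|v|^{2σ-2} ∂_v Q`, which cancel against the last two pieces, leaving the profile equation. -/

open MeasureTheory Complex
open scoped FourierTransform LineDeriv SchwartzMap

lemma SchwartzMap.integrable_one_add_norm_pow_mul {D V : Type*} [NormedAddCommGroup D]
    [NormedSpace ℝ D] [MeasurableSpace D] [BorelSpace D] [SecondCountableTopology D]
    [NormedAddCommGroup V] [NormedSpace ℝ V] (μ : Measure D) [μ.HasTemperateGrowth]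
    (f : 𝓢(D, V)) (k : ℕ) :
    Integrable (fun x ↦ (1 + ‖x‖) ^ k * ‖f x‖) μ := by
  refine (((f.integrable (μ := μ)).norm.add (f.integrable_pow_mul μ k)).const_mul
    (2 ^ (k - 1))).mono' (by fun_prop) (.of_forall fun x ↦ ?_)
  rw [norm_mul, norm_norm, Real.norm_of_nonneg (by positivity)]
  calc (1 + ‖x‖) ^ k * ‖f x‖ ≤ 2 ^ (k - 1) * (1 ^ k + ‖x‖ ^ k) * ‖f x‖ := by
        gcongr; exact add_pow_le zero_le_one (norm_nonneg x) k
    _ = 2 ^ (k - 1) * (‖f x‖ + ‖x‖ ^ k * ‖f x‖) := by ring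

section

variable {d : ℕ}

local notation "E" => EuclideanSpace ℝ (Fin d)

lemma fourierT_eq_fourier (g : E → ℂ) (ξ : E) :
    fourierT g ξ = 𝓕 g ((2 * Real.pi)⁻¹ • ξ) := by
  rw [Real.fourier_eq', fourierT]
  congr 1 with x
  have h : -2 * Real.pi * ((2 * Real.pi)⁻¹ * ⟪x, ξ⟫) = -⟪x, ξ⟫ := by field_simp
  rw [real_inner_smul_right, h, smul_eq_mul]
  push_cast
  ring_nf

lemma exists_schwartzMap_coe_eq_fourierT (f : 𝓢(E, ℂ)) : ∃ g : 𝓢(E, ℂ), ⇑g = fourierT f := by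
  have h2π : (2 * Real.pi)⁻¹ ≠ 0 := by positivity
  refine ⟨SchwartzMap.compCLMOfContinuousLinearEquiv ℂ
    (LinearEquiv.smulOfNeZero ℝ E _ h2π).toContinuousLinearEquiv (𝓕 f), ?_⟩
  ext ξ
  simp [fourierT_eq_fourier, SchwartzMap.fourier_coe]

noncomputable def fourierMultiplier (m g : E → ℂ) (x : E) : ℂ :=
  (((2 * Real.pi) ^ (-(d:ℝ)) : ℝ) : ℂ) *
    ∫ ξ : E, cexp (I * ((⟪x, ξ⟫ : ℝ) : ℂ)) * m ξ * fourierT g ξ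

lemma fracLap_eq_fourierMultiplier (σ : ℝ) :
    fracLap (d := d) σ = fourierMultiplier fun ξ ↦ ((‖ξ‖ ^ (2 * σ) : ℝ) : ℂ) :=
  rfl

lemma pOp_eq_fourierMultiplier (σ : ℝ) (v : E) :
    pOp σ v = fourierMultiplier fun ξ ↦ ((pSymbol σ v ξ : ℝ) : ℂ) :=
  rfl

def HasPolynomialGrowth (m : E → ℂ) : Prop :=
  AEStronglyMeasurable m ∧ ∃ (C : ℝ) (k : ℕ), ∀ ξ, ‖m ξ‖ ≤ C * (1 + ‖ξ‖) ^ k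

namespace HasPolynomialGrowth

lemma const (c : ℂ) : HasPolynomialGrowth fun _ : E ↦ c :=
  ⟨aestronglyMeasurable_const, ‖c‖, 0, fun _ ↦ by simp⟩

lemma inner (w : E) : HasPolynomialGrowth fun ξ : E ↦ ((⟪w, ξ⟫ : ℝ) : ℂ) := by
  refine ⟨by fun_prop, ‖w‖, 1, fun ξ ↦ ?_⟩
  rw [norm_real, Real.norm_eq_abs, pow_one]
  exact (abs_real_inner_le_norm w ξ).trans (by gcongr; linarith)

lemma norm_sub_rpow (v : E) {s : ℝ} (hs : 0 ≤ s) :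
    HasPolynomialGrowth fun ξ : E ↦ ((‖ξ - v‖ ^ s : ℝ) : ℂ) := by
  refine ⟨by fun_prop, (1 + ‖v‖) ^ ⌈s⌉₊, ⌈s⌉₊, fun ξ ↦ ?_⟩
  rw [norm_real, Real.norm_of_nonneg (by positivity), ← mul_pow]
  calc ‖ξ - v‖ ^ s ≤ (1 + ‖ξ - v‖) ^ s := by gcongr; linarith
    _ ≤ (1 + ‖ξ - v‖) ^ (⌈s⌉₊ : ℝ) :=
        Real.rpow_le_rpow_of_exponent_le (by linarith [norm_nonneg (ξ - v)]) (Nat.le_ceil s)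
    _ ≤ ((1 + ‖v‖) * (1 + ‖ξ‖)) ^ ⌈s⌉₊ := by
        rw [Real.rpow_natCast]
        gcongr
        nlinarith [norm_sub_le ξ v, norm_nonneg ξ, norm_nonneg v,
          mul_nonneg (norm_nonneg ξ) (norm_nonneg v)]

variable {m m' : EuclideanSpace ℝ (Fin d) → ℂ}

lemma add (hm : HasPolynomialGrowth m) (hm' : HasPolynomialGrowth m') :
    HasPolynomialGrowth (m + m') := by
  obtain ⟨hm, C, k, hC⟩ := hm
  obtain ⟨hm', C', k', hC'⟩ := hm'
  refine ⟨hm.add hm', |C| + |C'|, max k k', fun ξ ↦ ?_⟩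
  have h1 : (1 : ℝ) ≤ 1 + ‖ξ‖ := le_add_of_nonneg_right (norm_nonneg ξ)
  have hk : C * (1 + ‖ξ‖) ^ k ≤ |C| * (1 + ‖ξ‖) ^ max k k' :=
    mul_le_mul (le_abs_self C) (pow_le_pow_right₀ h1 (le_max_left _ _)) (by positivity)
      (abs_nonneg C)
  have hk' : C' * (1 + ‖ξ‖) ^ k' ≤ |C'| * (1 + ‖ξ‖) ^ max k k' :=
    mul_le_mul (le_abs_self C') (pow_le_pow_right₀ h1 (le_max_right _ _)) (by positivity)
      (abs_nonneg C')
  calc ‖(m + m') ξ‖ ≤ ‖m ξ‖ + ‖m' ξ‖ := norm_add_le _ _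
    _ ≤ |C| * (1 + ‖ξ‖) ^ max k k' + |C'| * (1 + ‖ξ‖) ^ max k k' :=
        add_le_add ((hC ξ).trans hk) ((hC' ξ).trans hk')
    _ = (|C| + |C'|) * (1 + ‖ξ‖) ^ max k k' := by ring

lemma const_mul (hm : HasPolynomialGrowth m) (c : ℂ) :
    HasPolynomialGrowth fun ξ ↦ c * m ξ := by
  obtain ⟨hm, C, k, hC⟩ := hm
  refine ⟨aestronglyMeasurable_const.mul hm, ‖c‖ * C, k, fun ξ ↦ ?_⟩
  rw [norm_mul, mul_assoc]
  exact mul_le_mul_of_nonneg_left (hC ξ) (norm_nonneg c)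

lemma sub (hm : HasPolynomialGrowth m) (hm' : HasPolynomialGrowth m') :
    HasPolynomialGrowth (m - m') := by
  convert hm.add (hm'.const_mul (-1)) using 1
  ext ξ
  simp [sub_eq_add_neg]

lemma integrable_fourierT (hm : HasPolynomialGrowth m) (f : 𝓢(E, ℂ)) (x : E) :
    Integrable fun ξ ↦ cexp (I * ((⟪x, ξ⟫ : ℝ) : ℂ)) * m ξ * fourierT f ξ := by
  obtain ⟨hm, C, k, hC⟩ := hm
  obtain ⟨g, hg⟩ := exists_schwartzMap_coe_eq_fourierT f
  rw [← hg]
  refine ((g.integrable_one_add_norm_pow_mul volume k).const_mul C).mono'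
    (((by fun_prop : Continuous fun ξ : E ↦ cexp (I * ((⟪x, ξ⟫ : ℝ) : ℂ))).aestronglyMeasurable.mul
      hm).mul g.continuous.aestronglyMeasurable) (.of_forall fun ξ ↦ ?_)
  rw [norm_mul, norm_mul, mul_comm I, norm_exp_ofReal_mul_I, one_mul, ← mul_assoc]
  exact mul_le_mul_of_nonneg_right (hC ξ) (norm_nonneg _)

end HasPolynomialGrowth

lemma integral_exp_mul_fourierT (f : 𝓢(E, ℂ)) (y : E) :
    ∫ ξ : E, cexp (I * ((⟪y, ξ⟫ : ℝ) : ℂ)) * fourierT f ξ = ((2 * Real.pi) ^ d : ℝ) * f y := by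
  have h := Measure.integral_comp_smul_of_nonneg volume
    (fun ξ : E ↦ cexp (I * ((⟪y, ξ⟫ : ℝ) : ℂ)) * fourierT f ξ) (2 * Real.pi)
    (hR := Real.two_pi_pos.le)
  rw [finrank_euclideanSpace_fin, eq_inv_smul_iff₀ (by positivity)] at h
  have hinv : 𝓕⁻ (𝓕 ⇑f) y = f y :=
    congrFun (f.continuous.fourierInv_fourier_eq f.integrable (𝓕 f).integrable) y
  rw [← h, ← hinv, Real.fourierInv_eq', Complex.real_smul]
  congr 2 with u
  rw [fourierT_eq_fourier, smul_smul, inv_mul_cancel₀ Real.two_pi_pos.ne', one_smul,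
    real_inner_smul_right, real_inner_comm, smul_eq_mul]
  push_cast
  ring_nf

lemma fourierT_lineDerivOp (f : 𝓢(E, ℂ)) (w ξ : E) :
    fourierT ⇑(∂_{w} f : 𝓢(E, ℂ)) ξ = I * ((⟪w, ξ⟫ : ℝ) : ℂ) * fourierT f ξ := by
  have hw : (fun x : E ↦ ⟪x, w⟫).HasTemperateGrowth := ((innerSL ℝ).flip w).hasTemperateGrowth
  rw [fourierT_eq_fourier, fourierT_eq_fourier, ← SchwartzMap.fourier_coe,
    SchwartzMap.fourier_lineDerivOp_eq, ← SchwartzMap.fourier_coe, smul_apply,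
    SchwartzMap.smulLeftCLM_apply_apply hw, real_inner_smul_left, real_inner_comm,
    Complex.real_smul, smul_eq_mul]
  have hπ : (Real.pi : ℂ) ≠ 0 := ofReal_ne_zero.2 Real.pi_ne_zero
  push_cast
  field_simp

lemma fourierMultiplier_const (f : 𝓢(E, ℂ)) (c : ℂ) (x : E) :
    fourierMultiplier (fun _ ↦ c) f x = c * f x := by
  have hpow : (((2 * Real.pi) ^ (-(d : ℝ)) : ℝ) : ℂ) * ((2 * Real.pi) ^ d : ℝ) = 1 := by
    rw [← ofReal_mul, Real.rpow_neg Real.two_pi_pos.le, Real.rpow_natCast,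
      inv_mul_cancel₀ (by positivity), ofReal_one]
  simp_rw [fourierMultiplier, mul_right_comm _ c, integral_mul_const, mul_comm _ c,
    integral_exp_mul_fourierT]
  linear_combination (c * f x) * hpow

lemma fourierMultiplier_const_mul (c : ℂ) (m g : E → ℂ) (x : E) :
    fourierMultiplier (fun ξ ↦ c * m ξ) g x = c * fourierMultiplier m g x := by
  have h (ξ : E) : cexp (I * ((⟪x, ξ⟫ : ℝ) : ℂ)) * (c * m ξ) * fourierT g ξ =
      c * (cexp (I * ((⟪x, ξ⟫ : ℝ) : ℂ)) * m ξ * fourierT g ξ) := by ring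
  simp_rw [fourierMultiplier, h, integral_const_mul]
  ring

lemma fourierMultiplier_inner (f : 𝓢(E, ℂ)) (w x : E) :
    fourierMultiplier (fun ξ ↦ ((⟪w, ξ⟫ : ℝ) : ℂ)) f x = -I * fderiv ℝ f x w := by
  rw [← SchwartzMap.lineDerivOp_apply_eq_fderiv, ← one_mul (∂_{w} f x),
    ← fourierMultiplier_const, fourierMultiplier, fourierMultiplier, mul_left_comm (-I),
    ← integral_const_mul (-I)]
  congr 2 with ξ
  rw [fourierT_lineDerivOp]
  linear_combination (cexp (I * ((⟪x, ξ⟫ : ℝ) : ℂ)) * ((⟪w, ξ⟫ : ℝ) : ℂ) * fourierT f ξ) * I_sq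

lemma fourierMultiplier_add {m m' : E → ℂ} (hm : HasPolynomialGrowth m)
    (hm' : HasPolynomialGrowth m') (f : 𝓢(E, ℂ)) (x : E) :
    fourierMultiplier (m + m') f x = fourierMultiplier m f x + fourierMultiplier m' f x := by
  rw [fourierMultiplier, fourierMultiplier, fourierMultiplier, ← mul_add,
    ← integral_add (hm.integrable_fourierT f x) (hm'.integrable_fourierT f x)]
  congr 2 with ξ
  simp only [Pi.add_apply]
  ring

lemma fourierMultiplier_sub {m m' : E → ℂ} (hm : HasPolynomialGrowth m)
    (hm' : HasPolynomialGrowth m') (f : 𝓢(E, ℂ)) (x : E) :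
    fourierMultiplier (m - m') f x = fourierMultiplier m f x - fourierMultiplier m' f x := by
  rw [fourierMultiplier, fourierMultiplier, fourierMultiplier, ← mul_sub,
    ← integral_sub (hm.integrable_fourierT f x) (hm'.integrable_fourierT f x)]
  congr 2 with ξ
  simp only [Pi.sub_apply]
  ring

lemma fourierT_modulate_translate (g : E → ℂ) (c : ℂ) (v a ξ : E) :
    fourierT (fun y ↦ c * cexp (-(I * ((⟪v, y⟫ : ℝ) : ℂ))) * g (y - a)) ξ =
      c * cexp (-(I * ((⟪a, ξ + v⟫ : ℝ) : ℂ))) * fourierT g (ξ + v) := by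
  rw [fourierT, ← integral_add_right_eq_self _ a, fourierT, ← integral_const_mul]
  congr 1 with z
  calc cexp (-(I * ((⟪z + a, ξ⟫ : ℝ) : ℂ))) *
        (c * cexp (-(I * ((⟪v, z + a⟫ : ℝ) : ℂ))) * g (z + a - a))
      = c * g z * cexp (-(I * ((⟪z + a, ξ⟫ : ℝ) : ℂ)) + -(I * ((⟪v, z + a⟫ : ℝ) : ℂ))) := by
        rw [add_sub_cancel_right, exp_add]; ring
    _ = c * g z * cexp (-(I * ((⟪a, ξ + v⟫ : ℝ) : ℂ)) + -(I * ((⟪z, ξ + v⟫ : ℝ) : ℂ))) := by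
        simp only [inner_add_left, inner_add_right, real_inner_comm v]
        push_cast
        ring_nf
    _ = _ := by rw [exp_add]; ring

lemma fourierMultiplier_modulate_translate (m g : E → ℂ) (c : ℂ) (v a x : E) :
    fourierMultiplier m (fun y ↦ c * cexp (-(I * ((⟪v, y⟫ : ℝ) : ℂ))) * g (y - a)) x =
      c * cexp (-(I * ((⟪v, x⟫ : ℝ) : ℂ))) * fourierMultiplier (fun η ↦ m (η - v)) g (x - a) := by
  simp_rw [fourierMultiplier, fourierT_modulate_translate]
  rw [← integral_sub_right_eq_self _ v, mul_left_comm (c * _),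
    ← integral_const_mul (c * cexp (-(I * ((⟪v, x⟫ : ℝ) : ℂ))))]
  congr 2 with η
  calc cexp (I * ((⟪x, η - v⟫ : ℝ) : ℂ)) * m (η - v) *
        (c * cexp (-(I * ((⟪a, η - v + v⟫ : ℝ) : ℂ))) * fourierT g (η - v + v))
      = c * m (η - v) * fourierT g η *
          cexp (I * ((⟪x, η - v⟫ : ℝ) : ℂ) + -(I * ((⟪a, η⟫ : ℝ) : ℂ))) := by
        rw [sub_add_cancel, exp_add]; ring
    _ = c * m (η - v) * fourierT g η *
          cexp (-(I * ((⟪v, x⟫ : ℝ) : ℂ)) + I * ((⟪x - a, η⟫ : ℝ) : ℂ)) := by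
        simp only [inner_sub_left, inner_sub_right, real_inner_comm v]
        push_cast
        ring_nf
    _ = _ := by rw [exp_add]; ring

lemma fourierMultiplier_norm_sub_rpow (f : 𝓢(E, ℂ)) {σ : ℝ} (hσ : 0 ≤ σ) (v y : E) :
    fourierMultiplier (fun η ↦ ((‖η - v‖ ^ (2 * σ) : ℝ) : ℂ)) f y =
      pOp σ v f y + ((‖v‖ ^ (2 * σ) : ℝ) : ℂ) * f y +
        ((2 * σ * ‖v‖ ^ (2 * σ - 2) : ℝ) : ℂ) * (I * fderiv ℝ f y v) := by
  have hs := HasPolynomialGrowth.norm_sub_rpow v (by positivity : 0 ≤ 2 * σ)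
  have hc := HasPolynomialGrowth.const (d := d) ((‖v‖ ^ (2 * σ) : ℝ) : ℂ)
  have hi := (HasPolynomialGrowth.inner v).const_mul ((2 * σ * ‖v‖ ^ (2 * σ - 2) : ℝ) : ℂ)
  have hp : (fun ξ ↦ ((pSymbol σ v ξ : ℝ) : ℂ)) =
      (fun η ↦ ((‖η - v‖ ^ (2 * σ) : ℝ) : ℂ)) - (fun _ ↦ ((‖v‖ ^ (2 * σ) : ℝ) : ℂ)) +
        fun ξ ↦ ((2 * σ * ‖v‖ ^ (2 * σ - 2) : ℝ) : ℂ) * ((⟪v, ξ⟫ : ℝ) : ℂ) := by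
    ext ξ
    simp only [pSymbol, Pi.add_apply, Pi.sub_apply]
    push_cast
    ring
  rw [pOp_eq_fourierMultiplier, hp, fourierMultiplier_add (hs.sub hc) hi,
    fourierMultiplier_sub hs hc, fourierMultiplier_const, fourierMultiplier_const_mul,
    fourierMultiplier_inner]
  ring

lemma fracLap_solitonWave {σ : ℝ} (hσ : 0 ≤ σ) (ω : ℝ) (v : E) (Q : 𝓢(E, ℂ)) (t : ℝ) (x : E) :
    fracLap σ (solitonWave σ ω v Q t) x =
      cexp (I * t * ((‖v‖ ^ (2 * σ) - ω ^ (2 * σ) : ℝ) : ℂ)) * cexp (-(I * ((⟪v, x⟫ : ℝ) : ℂ))) *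
        (pOp σ v Q (x - (2 * t * σ * ‖v‖ ^ (2 * σ - 2)) • v) +
          ((‖v‖ ^ (2 * σ) : ℝ) : ℂ) * Q (x - (2 * t * σ * ‖v‖ ^ (2 * σ - 2)) • v) +
          ((2 * σ * ‖v‖ ^ (2 * σ - 2) : ℝ) : ℂ) *
            (I * fderiv ℝ Q (x - (2 * t * σ * ‖v‖ ^ (2 * σ - 2)) • v) v)) := by
  rw [fracLap_eq_fourierMultiplier]
  unfold solitonWave
  rw [fourierMultiplier_modulate_translate, ← fourierMultiplier_norm_sub_rpow Q hσ]

lemma norm_solitonWave (σ ω : ℝ) (v : E) (Q : 𝓢(E, ℂ)) (t : ℝ) (x : E) :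
    ‖solitonWave σ ω v Q t x‖ = ‖Q (x - (2 * t * σ * ‖v‖ ^ (2 * σ - 2)) • v)‖ := by
  simp [solitonWave, norm_exp]

lemma hasDerivAt_solitonWave (σ ω : ℝ) (v : E) (Q : 𝓢(E, ℂ)) (t : ℝ) (x : E) :
    HasDerivAt (fun s ↦ solitonWave σ ω v Q s x)
      (I * ((‖v‖ ^ (2 * σ) - ω ^ (2 * σ) : ℝ) : ℂ) * solitonWave σ ω v Q t x -
        cexp (I * t * ((‖v‖ ^ (2 * σ) - ω ^ (2 * σ) : ℝ) : ℂ)) *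
          cexp (-(I * ((⟪v, x⟫ : ℝ) : ℂ))) * ((2 * σ * ‖v‖ ^ (2 * σ - 2) : ℝ) : ℂ) *
            fderiv ℝ Q (x - (2 * t * σ * ‖v‖ ^ (2 * σ - 2)) • v) v) t := by
  set β : ℂ := ((‖v‖ ^ (2 * σ) - ω ^ (2 * σ) : ℝ) : ℂ)
  have hphase : HasDerivAt (fun s : ℝ ↦ cexp (I * s * β)) (cexp (I * t * β) * (I * β)) t := by
    simpa using (((hasDerivAt_id t).ofReal_comp.const_mul I).mul_const β).cexp
  have hpath : HasDerivAt (fun s : ℝ ↦ x - (2 * s * σ * ‖v‖ ^ (2 * σ - 2)) • v)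
      (-((2 * σ * ‖v‖ ^ (2 * σ - 2)) • v)) t := by
    simpa using ((((hasDerivAt_id t).const_mul 2).mul_const σ).mul_const
      (‖v‖ ^ (2 * σ - 2))).smul_const v |>.const_sub x
  have hprofile := Q.differentiableAt.hasFDerivAt.comp_hasDerivAt t hpath
  refine ((hphase.mul_const (cexp (-(I * ((⟪v, x⟫ : ℝ) : ℂ))))).mul hprofile).congr_deriv ?_
  rw [solitonWave, map_neg, map_smul, real_smul, Function.comp_apply]
  ring

end

theorem soliton_solves_focusing_fNLS_general
    (d : ℕ) (σ : ℝ) (hσ : σ ∈ Set.Ioo (0:ℝ) 1)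
    (p : ℝ) (ω : ℝ)
    (v : EuclideanSpace ℝ (Fin d))
    (Q : SchwartzMap (EuclideanSpace ℝ (Fin d)) ℂ)
    (hQ : ∀ x : EuclideanSpace ℝ (Fin d),
      pOp σ v (fun y => Q y) x + ((ω ^ (2*σ) : ℝ) : ℂ) * Q x
        - ((‖Q x‖ ^ (p - 1) : ℝ) : ℂ) * Q x = 0) :
    ∀ (t : ℝ) (x : EuclideanSpace ℝ (Fin d)), ∃ ut : ℂ,
      HasDerivAt (fun s => solitonWave σ ω v Q s x) ut t ∧
      Complex.I * ut + fracLap σ (fun y => solitonWave σ ω v Q t y) x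
        - ((‖solitonWave σ ω v Q t x‖ ^ (p - 1) : ℝ) : ℂ)
          * solitonWave σ ω v Q t x = 0 := by
  intro t x
  set y := x - (2 * t * σ * ‖v‖ ^ (2 * σ - 2)) • v
  set phase := cexp (I * t * ((‖v‖ ^ (2 * σ) - ω ^ (2 * σ) : ℝ) : ℂ)) *
    cexp (-(I * ((⟪v, x⟫ : ℝ) : ℂ))) with hphase
  refine ⟨_, hasDerivAt_solitonWave σ ω v Q t x, ?_⟩
  rw [fracLap_solitonWave hσ.1.le, norm_solitonWave, solitonWave, ← hphase]
  linear_combination phase * hQ y + phase * Q y * (((‖v‖ ^ (2 * σ) - ω ^ (2 * σ) : ℝ) : ℂ) * I_sq -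
    ofReal_sub (‖v‖ ^ (2 * σ)) (ω ^ (2 * σ)))

theorem soliton_solves_focusing_fNLS
    (d : ℕ) (hd : 1 ≤ d) (σ : ℝ) (hσ : σ ∈ Set.Ioo (0:ℝ) 1)
    (p : ℝ) (hp : 1 < p) (ω : ℝ) (hω : 0 < ω)
    (v : EuclideanSpace ℝ (Fin d)) (hv : v ≠ 0)
    (Q : SchwartzMap (EuclideanSpace ℝ (Fin d)) ℂ)
    (hQ : ∀ x : EuclideanSpace ℝ (Fin d),
      pOp σ v (fun y => Q y) x + ((ω ^ (2*σ) : ℝ) : ℂ) * Q x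
        - ((‖Q x‖ ^ (p - 1) : ℝ) : ℂ) * Q x = 0) :
    ∀ (t : ℝ) (x : EuclideanSpace ℝ (Fin d)), ∃ ut : ℂ,
      HasDerivAt (fun s => solitonWave σ ω v Q s x) ut t ∧
      Complex.I * ut + fracLap σ (fun y => solitonWave σ ω v Q t y) x
        - ((‖solitonWave σ ω v Q t x‖ ^ (p - 1) : ℝ) : ℂ)
          * solitonWave σ ω v Q t x = 0 :=
  soliton_solves_focusing_fNLS_general d σ hσ p ω v Q hQ
end
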